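/- arXiv:1407.5593 — 6 statements merged into one kernel-verified Lean document; each statement's English description precedes it below -/
import Mathlib

section
/- Let A ∈ ℝ^{M×M} be invertible, let x* be the (unique) solution of the consistent system Ax = b, and let the rows of A be partitioned into blocks A_1, …, A_k, each A_i ∈ ℝ^{M_i×M} of full row rank. For the cyclic block Kaczmarz iteration x_{j+1} = x_j + A_iᵀ(A_i A_iᵀ)⁻¹(b_i − A_i x_j) with i = (j mod k) + 1, there exists ε ∈ (0,1) such that for every initial point x_0 and every number of cycles q ≥ 1, ‖x_{qk} − x*‖₂ ≤ (1 − ε)^q ‖x_0 − x*‖₂; that is, the block Kaczmarz method converges exponentially in the number of cycles. -/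
/-!
Each Kaczmarz step sends the error `x_j - x*` to its orthogonal projection onto `ker A_i`, so
after a full cycle the error has been multiplied by a fixed product `T` of `k` orthogonal
projections. Such a product preserves the norm of `v` only if `v` lies in every `ker A_i`, and
these kernels meet only in `0` because `A` is invertible. Hence `‖T v‖ < ‖v‖` for `v ≠ 0`, and
by compactness of the unit sphere `‖T‖ < 1`.
-/

open Matrix WithLp

theorem ContinuousLinearMap.opNorm_lt_one_of_norm_apply_lt {𝕜 E F : Type*} [RCLike 𝕜]
    [NormedAddCommGroup E] [NormedSpace 𝕜 E] [FiniteDimensional 𝕜 E]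
    [NormedAddCommGroup F] [NormedSpace 𝕜 F] (T : E →L[𝕜] F)
    (hT : ∀ v ≠ 0, ‖T v‖ < ‖v‖) : ‖T‖ < 1 := by
  have := FiniteDimensional.proper_rclike 𝕜 E
  cases subsingleton_or_nontrivial E with
  | inl _ => simp [T.opNorm_subsingleton]
  | inr _ =>
    obtain ⟨v₀, hv₀, hmax⟩ := (isCompact_sphere (0 : E) 1).exists_isMaxOn
      (Set.nonempty_coe_sort.mp (NormedSpace.sphere_nonempty_rclike 𝕜 zero_le_one))
      (continuous_norm.comp T.continuous).continuousOn
    rw [mem_sphere_zero_iff_norm] at hv₀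
    calc ‖T‖ ≤ ‖T v₀‖ := T.opNorm_le_of_unit_norm (norm_nonneg _)
          fun v hv => hmax (mem_sphere_zero_iff_norm.mpr hv)
      _ < 1 := hv₀ ▸ hT v₀ (norm_ne_zero_iff.mp (by simp [hv₀]))

section CyclicProjections

variable {𝕜 E : Type*} [RCLike 𝕜] [NormedAddCommGroup E] [InnerProductSpace 𝕜 E]
  (P : ℕ → Submodule 𝕜 E) [∀ j, (P j).HasOrthogonalProjection]

/-- `compStarProjections P n` projects successively onto `P 0`, `P 1`, …, `P (n - 1)`. -/
noncomputable def compStarProjections : ℕ → E →L[𝕜] E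
  | 0 => ContinuousLinearMap.id 𝕜 E
  | n + 1 => (P n).starProjection ∘L compStarProjections n

variable {P}

theorem compStarProjections_apply_of_forall_mem {n : ℕ} {v : E} (hv : ∀ j < n, v ∈ P j) :
    compStarProjections P n v = v := by
  induction n with
  | zero => rfl
  | succ n ih =>
    rw [compStarProjections, ContinuousLinearMap.comp_apply, ih fun j hj => hv j (by omega),
      Submodule.starProjection_eq_self_iff]
    exact hv n n.lt_succ_self

theorem norm_compStarProjections_apply_le (n : ℕ) (v : E) :
    ‖compStarProjections P n v‖ ≤ ‖v‖ := by
  induction n with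
  | zero => rfl
  | succ n ih => exact ((P n).norm_starProjection_apply_le _).trans ih

theorem forall_mem_of_norm_compStarProjections_apply_eq {n : ℕ} {v : E}
    (h : ‖compStarProjections P n v‖ = ‖v‖) : ∀ j < n, v ∈ P j := by
  induction n with
  | zero => intro j hj; omega
  | succ n ih =>
    have hlast := (P n).norm_starProjection_apply_le (compStarProjections P n v)
    have hmem := ih <| le_antisymm (norm_compStarProjections_apply_le n v) (h ▸ hlast)
    rw [compStarProjections, ContinuousLinearMap.comp_apply,
      compStarProjections_apply_of_forall_mem hmem] at h
    intro j hj
    rcases Nat.lt_succ_iff_lt_or_eq.mp hj with hj | rfl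
    · exact hmem j hj
    · exact ((P j).mem_iff_norm_starProjection v).mpr h

theorem norm_compStarProjections_lt_one [FiniteDimensional 𝕜 E] {n : ℕ}
    (hP : ∀ v, (∀ j < n, v ∈ P j) → v = 0) : ‖compStarProjections P n‖ < 1 :=
  ContinuousLinearMap.opNorm_lt_one_of_norm_apply_lt _ fun v hv =>
    (norm_compStarProjections_apply_le n v).lt_of_ne fun h =>
      hv (hP v (forall_mem_of_norm_compStarProjections_apply_eq h))

theorem eq_compStarProjections_of_succ_eq {e : ℕ → E} {n : ℕ}
    (he : ∀ j < n, e (j + 1) = (P j).starProjection (e j)) :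
    e n = compStarProjections P n (e 0) := by
  induction n with
  | zero => rfl
  | succ n ih =>
    rw [he n n.lt_succ_self, ih fun j hj => he j (by omega)]
    rfl

theorem eq_compStarProjections_of_periodic {k : ℕ} (hP : Function.Periodic P k) {e : ℕ → E}
    (he : ∀ j, e (j + 1) = (P j).starProjection (e j)) (p : ℕ) :
    e ((p + 1) * k) = compStarProjections P k (e (p * k)) := by
  have hPp (j : ℕ) : P (p * k + j) = P j := by simpa [add_comm] using hP.nat_mul p j
  rw [add_one_mul]
  exact eq_compStarProjections_of_succ_eq (e := fun j => e (p * k + j))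
    fun j _ => by simp only [← add_assoc, he, hPp]

theorem norm_le_pow_mul_of_periodic {k : ℕ} (hP : Function.Periodic P k) {e : ℕ → E}
    (he : ∀ j, e (j + 1) = (P j).starProjection (e j)) (q : ℕ) :
    ‖e (q * k)‖ ≤ ‖compStarProjections P k‖ ^ q * ‖e 0‖ := by
  simpa using le_geom (u := fun p => ‖e (p * k)‖) (norm_nonneg _) q fun p _ => by
    simpa only [eq_compStarProjections_of_periodic hP he p] using
      (compStarProjections P k).le_opNorm (e (p * k))

end CyclicProjections

section KaczmarzStep

theorem Matrix.mem_ker_toLpLin_iff {m n R : Type*} [Fintype n] [DecidableEq n] [CommRing R]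
    (p q : ENNReal) (C : Matrix m n R) (v : WithLp p (n → R)) :
    v ∈ LinearMap.ker (toLpLin p q C) ↔ C *ᵥ ofLp v = 0 := by
  rw [LinearMap.mem_ker, toLpLin_apply, toLp_eq_zero]

variable {m n : Type*} [Fintype m] [Fintype n] [DecidableEq m]

theorem isUnit_det_mul_transpose_of_rank_eq {C : Matrix m n ℝ} (hC : C.rank = Fintype.card m) :
    IsUnit (C * Cᵀ).det := by
  rw [← isUnit_iff_isUnit_det, ← mulVec_surjective_iff_isUnit]
  change Function.Surjective (C * Cᵀ).mulVecLin
  rw [← LinearMap.range_eq_top]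
  apply Submodule.eq_top_of_finrank_eq
  rw [← rank_self_mul_transpose] at hC
  simpa [Matrix.rank] using hC

theorem starProjection_ker_toLpLin [DecidableEq n] {C : Matrix m n ℝ} (hC : IsUnit (C * Cᵀ).det)
    (v : EuclideanSpace ℝ n) :
    (LinearMap.ker (toLpLin 2 2 C)).starProjection v =
      v - toLp 2 (Cᵀ *ᵥ ((C * Cᵀ)⁻¹ *ᵥ (C *ᵥ ofLp v))) := by
  apply Submodule.eq_starProjection_of_mem_of_inner_eq_zero
  · rw [mem_ker_toLpLin_iff]
    simp only [ofLp_sub, mulVec_sub, mulVec_mulVec, ← Matrix.mul_assoc,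
      mul_nonsing_inv _ hC, Matrix.one_mul, sub_self]
  · intro w hw
    rw [mem_ker_toLpLin_iff] at hw
    rw [sub_sub_cancel, EuclideanSpace.inner_eq_star_dotProduct, ofLp_toLp, star_trivial,
      dotProduct_mulVec, vecMul_transpose, hw, zero_dotProduct]

theorem kaczmarz_step_sub_eq_starProjection [DecidableEq n] {C : Matrix m n ℝ}
    (hC : IsUnit (C * Cᵀ).det) (x xstar : EuclideanSpace ℝ n) :
    x + toLp 2 (Cᵀ *ᵥ ((C * Cᵀ)⁻¹ *ᵥ (C *ᵥ ofLp xstar - C *ᵥ ofLp x))) - xstar =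
      (LinearMap.ker (toLpLin 2 2 C)).starProjection (x - xstar) := by
  rw [starProjection_ker_toLpLin hC, ← mulVec_sub,
    show ofLp xstar - ofLp x = -ofLp (x - xstar) by rw [ofLp_sub, neg_sub],
    mulVec_neg, mulVec_neg, mulVec_neg, toLp_neg]
  abel

end KaczmarzStep

section Blocks

variable {ι l n α : Type*} {m : ι → Type*} [Fintype n]

theorem mulVec_apply_of_row_eq [NonUnitalNonAssocSemiring α] {C : Matrix l n α}
    {A : Matrix ι n α} {f : l → ι} (h : ∀ r, C r = A (f r)) (v : n → α) (r : l) :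
    (C *ᵥ v) r = (A *ᵥ v) (f r) :=
  congrArg (· ⬝ᵥ v) (h r)

theorem eq_zero_of_forall_mem_ker_block [DecidableEq n] {A : Matrix n n ℝ} (hA : IsUnit A.det)
    (e : (Σ i, m i) ≃ n) {B : (i : ι) → Matrix (m i) n ℝ} (hB : ∀ i r, B i r = A (e ⟨i, r⟩))
    {v : EuclideanSpace ℝ n} (hv : ∀ i, v ∈ LinearMap.ker (toLpLin 2 2 (B i))) : v = 0 := by
  have hAv : A *ᵥ ofLp v = 0 := by
    funext r
    obtain ⟨⟨i, s⟩, rfl⟩ := e.surjective r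
    rw [← mulVec_apply_of_row_eq (hB i), (mem_ker_toLpLin_iff _ _ _ _).mp (hv i)]
    rfl
  have hinj := mulVec_injective_iff_isUnit.mpr ((isUnit_iff_isUnit_det A).mpr hA)
  simpa using hinj (hAv.trans (mulVec_zero A).symm)

end Blocks

/-- For an invertible `A : ℝ^{M×M}` with consistent system `A x = b`
(solution `x*`), and a row-partition of `A` into full-row-rank blocks `B 1, …, B k`
(encoded by an equivalence `e` between the disjoint union of the block row-index sets and
`Fin M`), the cyclic block Kaczmarz iteration
`x_{j+1} = x_j + A_iᵀ (A_i A_iᵀ)⁻¹ (b_i − A_i x_j)`, `i = j mod k`,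
converges exponentially in the number of cycles: there is `ε ∈ (0,1)` such that for every
initial point `x 0` and every `q ≥ 1`, `‖x (qk) − x*‖ ≤ (1 − ε)^q ‖x 0 − x*‖`. -/
theorem block_kaczmarz_exponential_convergence
    {M k : ℕ} (hk : 0 < k) (m : Fin k → ℕ)
    (A : Matrix (Fin M) (Fin M) ℝ) (hA : IsUnit A.det)
    (e : ((i : Fin k) × Fin (m i)) ≃ Fin M)
    (B : (i : Fin k) → Matrix (Fin (m i)) (Fin M) ℝ)
    (hB : ∀ (i : Fin k) (r : Fin (m i)), B i r = A (e ⟨i, r⟩))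
    (hrank : ∀ i, (B i).rank = m i)
    (b : Fin M → ℝ) (xstar : EuclideanSpace ℝ (Fin M))
    (hsol : A.mulVec xstar = b) :
    ∃ ε : ℝ, 0 < ε ∧ ε < 1 ∧
      ∀ x : ℕ → EuclideanSpace ℝ (Fin M),
        (∀ (j : ℕ) (i : Fin k), (i : ℕ) = j % k →
          x (j + 1) = x j + (WithLp.equiv 2 (Fin M → ℝ)).symm
            ((B i)ᵀ.mulVec ((B i * (B i)ᵀ)⁻¹.mulVec
              ((fun r => b (e ⟨i, r⟩)) - (B i).mulVec (x j))))) →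
        ∀ q : ℕ, 1 ≤ q →
          ‖x (q * k) - xstar‖ ≤ (1 - ε) ^ q * ‖x 0 - xstar‖ := by
  have : NeZero k := ⟨hk.ne'⟩
  set K : Fin k → Submodule ℝ (EuclideanSpace ℝ (Fin M)) :=
    fun i => LinearMap.ker (toLpLin 2 2 (B i))
  set P : ℕ → Submodule ℝ (EuclideanSpace ℝ (Fin M)) := fun j => K (Fin.ofNat k j)
  have hP : Function.Periodic P k :=
    Function.Periodic.comp (f := Fin.ofNat k) (fun j => Fin.ext (by simp)) K
  set T := compStarProjections P k
  have hT : ‖T‖ < 1 := norm_compStarProjections_lt_one fun v hv =>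
    eq_zero_of_forall_mem_ker_block hA e hB fun i => by
      simpa only [P, Fin.ofNat_val_eq_self] using hv i i.isLt
  -- the `max` keeps `ε = 1 - c` below `1` even when `T = 0`
  set c := max ‖T‖ (1 / 2)
  refine ⟨1 - c, by linarith [max_lt hT (by norm_num : (1 / 2 : ℝ) < 1)],
    by linarith [le_max_right ‖T‖ (1 / 2)], fun x hx q _ => ?_⟩
  have hstep (j : ℕ) : x (j + 1) - xstar = (P j).starProjection (x j - xstar) := by
    have hb : (fun r => b (e ⟨Fin.ofNat k j, r⟩)) = B (Fin.ofNat k j) *ᵥ ofLp xstar :=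
      funext fun r => by rw [mulVec_apply_of_row_eq (hB _), hsol]
    rw [hx j _ (Fin.val_ofNat k j), hb]
    exact kaczmarz_step_sub_eq_starProjection
      (isUnit_det_mul_transpose_of_rank_eq (by simpa using hrank _)) (x j) xstar
  calc ‖x (q * k) - xstar‖ ≤ ‖T‖ ^ q * ‖x 0 - xstar‖ :=
        norm_le_pow_mul_of_periodic hP (e := fun j => x j - xstar) hstep q
    _ ≤ (1 - (1 - c)) ^ q * ‖x 0 - xstar‖ := by
        rw [sub_sub_cancel]; gcongr; exact le_max_left _ _
end

section
/- Let A ∈ ℝ^{M×M} be invertible with row blocks A_1, …, A_k partitioning its rows, and let P_i denote the orthogonal projection of ℝ^M onto Sp⊥(A_iᵀ), the orthogonal complement of the row space of A_i. Then the operator norm of the composition over one cycle is strictly less than one: ‖P_k ∘ P_{k−1} ∘ ⋯ ∘ P_1‖ < 1; equivalently, sup over unit vectors v ∈ ℝ^M of ‖P_k P_{k−1} ⋯ P_1 v‖₂ ≤ 1 − ε for some ε ∈ (0,1). -/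
open Matrix

/-!
A product of orthogonal projections never increases the norm, and it preserves the norm of `v`
only if every factor fixes `v`, i.e. `v` lies in all the ranges. For the cycle in question the
ranges are the complements `Sp⊥(A_iᵀ)`, whose intersection is `ker A = 0`; so the cycle strictly
shrinks every nonzero vector, and by compactness of the unit sphere its norm is `< 1`.
-/

namespace ContinuousLinearMap

variable {E F : Type*} [NormedAddCommGroup E] [NormedSpace ℝ E] [ProperSpace E]
  [NormedAddCommGroup F] [NormedSpace ℝ F]

theorem opNorm_lt_of_norm_apply_lt (T : E →L[ℝ] F) {c : ℝ} (hc : 0 < c)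
    (h : ∀ v ≠ 0, ‖T v‖ < c * ‖v‖) : ‖T‖ < c := by
  rcases subsingleton_or_nontrivial E with _ | _
  · rwa [opNorm_subsingleton]
  obtain ⟨x, hx, hmax⟩ := (isCompact_sphere (0 : E) 1).exists_isMaxOn
    (NormedSpace.sphere_nonempty.mpr zero_le_one) T.continuous.norm.continuousOn
  have hx1 : ‖x‖ = 1 := mem_sphere_zero_iff_norm.mp hx
  calc ‖T‖ ≤ ‖T x‖ := opNorm_le_of_unit_norm (norm_nonneg _)
          fun v hv ↦ hmax (mem_sphere_zero_iff_norm.mpr hv)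
    _ < c := by simpa [hx1] using h x (norm_ne_zero_iff.mp (hx1 ▸ one_ne_zero))

end ContinuousLinearMap

namespace Submodule

variable {𝕜 E : Type*} [RCLike 𝕜] [NormedAddCommGroup E] [InnerProductSpace 𝕜 E]
  [FiniteDimensional 𝕜 E]

theorem norm_reverse_prod_starProjection_apply_le (Ks : List (Submodule 𝕜 E)) (v : E) :
    ‖(Ks.map fun K ↦ K.starProjection).reverse.prod v‖ ≤ ‖v‖ := by
  induction Ks generalizing v with
  | nil => simp
  | cons K Ks ih =>
    simpa using (ih (K.starProjection v)).trans (K.norm_starProjection_apply_le v)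

theorem mem_of_norm_reverse_prod_starProjection_apply_eq {Ks : List (Submodule 𝕜 E)} {v : E}
    (h : ‖(Ks.map fun K ↦ K.starProjection).reverse.prod v‖ = ‖v‖) :
    ∀ K ∈ Ks, v ∈ K := by
  induction Ks with
  | nil => simp
  | cons K Ks ih =>
    simp only [List.map_cons, List.reverse_cons, List.prod_append, List.prod_singleton,
      mul_apply_eq_comp] at h
    have hK : v ∈ K := (K.mem_iff_norm_starProjection v).mpr <|
      (K.norm_starProjection_apply_le v).antisymm <|
        h.ge.trans (norm_reverse_prod_starProjection_apply_le Ks _)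
    rw [(starProjection_eq_self_iff).mpr hK] at h
    exact List.forall_mem_cons.mpr ⟨hK, ih h⟩

end Submodule

theorem Matrix.eq_zero_of_forall_inner_row_eq_zero {n : Type*} [Fintype n] [DecidableEq n]
    {A : Matrix n n ℝ} (hA : A.det ≠ 0) {v : EuclideanSpace ℝ n}
    (h : ∀ r, inner ℝ (WithLp.toLp 2 (A r)) v = 0) : v = 0 := by
  have hAv : A *ᵥ v.ofLp = 0 := by
    ext r
    simpa [EuclideanSpace.inner_eq_star_dotProduct, mulVec, dotProduct_comm] using h r
  simpa using congrArg (WithLp.toLp 2) (eq_zero_of_mulVec_eq_zero hA hAv)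

/-- Let `A : ℝ^{M×M}` be invertible with rows partitioned into `k` blocks
(row `r` belongs to block `part r`), and let `P i` be the orthogonal projection of `ℝ^M` onto
the orthogonal complement of the span of the rows of block `i`. Then the operator norm of the
composition over one cycle, `P_k ∘ P_{k−1} ∘ ⋯ ∘ P_1`, is strictly less than one. -/
theorem cycle_of_projections_opNorm_lt_one
    {M k : ℕ}
    (A : Matrix (Fin M) (Fin M) ℝ) (hA : IsUnit A.det)
    (part : Fin M → Fin k)
    (S : Fin k → Submodule ℝ (EuclideanSpace ℝ (Fin M)))
    (hS : ∀ i, S i = Submodule.span ℝ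
      ((fun r => (WithLp.equiv 2 (Fin M → ℝ)).symm (A r)) '' {r | part r = i}))
    (P : Fin k → (EuclideanSpace ℝ (Fin M) →L[ℝ] EuclideanSpace ℝ (Fin M)))
    (hP : ∀ i, P i = ((S i)ᗮ).subtypeL.comp ((S i)ᗮ).orthogonalProjectionOnto) :
    ‖(List.ofFn P).reverse.prod‖ < 1 := by
  have hcycle : List.ofFn P = (List.ofFn fun i ↦ (S i)ᗮ).map fun K ↦ K.starProjection := by
    rw [List.map_ofFn]; exact congrArg List.ofFn (funext hP)
  refine ContinuousLinearMap.opNorm_lt_of_norm_apply_lt _ one_pos fun v hv ↦ ?_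
  rw [one_mul, hcycle]
  refine (Submodule.norm_reverse_prod_starProjection_apply_le _ v).lt_of_ne fun heq ↦ hv ?_
  have hperp := Submodule.mem_of_norm_reverse_prod_starProjection_apply_eq heq
  refine Matrix.eq_zero_of_forall_inner_row_eq_zero hA.ne_zero fun r ↦ ?_
  have hrow : WithLp.toLp 2 (A r) ∈ S (part r) := hS _ ▸ Submodule.subset_span ⟨r, rfl, rfl⟩
  exact (Submodule.mem_orthogonal _ v).mp (hperp _ (List.mem_ofFn.mpr ⟨part r, rfl⟩)) _ hrow
end

section
/- (Halperin) Let M_1, M_2, …, M_k be closed subspaces of a real Hilbert space H, let M = ∩_{i=1}^k M_i, and let P_{M_i} denote the orthogonal projection onto M_i. Then for every x ∈ H, the iterated cyclic products of projections converge: lim_{q→∞} (P_{M_k} P_{M_{k−1}} ⋯ P_{M_1})^q x = P_M x, where P_M is the orthogonal projection onto the intersection M. -/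
/-!
Write `T = P_k ⋯ P_1`. Each projection satisfies `‖x - P x‖² = ‖x‖² - ‖P x‖²`, and chaining `k`
of them gives `‖x - T x‖² ≤ k (‖x‖² - ‖T x‖²)`. As `‖Tⁿ x‖` decreases, this forces
`Tⁿ⁺¹ x - Tⁿ x → 0`. For a contraction `T` of a Hilbert space, the orthogonal complement of the
fixed subspace `Fix T` lies in the closure of `range (T - 1)`, as in von Neumann's mean ergodic
theorem. Orbits of points of `range (T - 1)` tend to `0` by the previous step, hence so do orbits
of points of its closure, the powers `Tⁿ` being uniformly `1`-Lipschitz; thus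
`Tⁿ x → P_{Fix T} x`. Finally `Fix T = ⋂ M_i`: if `T x = x`, no projection in the chain can
decrease the norm, so each of them fixes `x`.
-/

open Filter Topology

theorem sq_le_succ_mul_add_of_le_add {a b c n A B : ℝ} (hn : 0 ≤ n) (hA : 0 ≤ A) (hc : 0 ≤ c)
    (habc : c ≤ a + b) (ha : a ^ 2 ≤ n * A) (hb : b ^ 2 ≤ B) : c ^ 2 ≤ (n + 1) * (A + B) := by
  have hcab : c ^ 2 ≤ (a + b) ^ 2 := pow_le_pow_left₀ hc habc 2
  rcases hn.eq_or_lt with rfl | hn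
  · have : a = 0 := by nlinarith
    subst this
    nlinarith
  · -- `(a + b)² ≤ (n + 1) (a² / n + b²)`, cleared of the denominator
    refine le_of_mul_le_mul_left ?_ hn
    nlinarith [sq_nonneg (a - n * b), mul_le_mul_of_nonneg_left hb hn.le]

section NormedSpace

variable {𝕜 E : Type*} [NontriviallyNormedField 𝕜] [NormedAddCommGroup E] [NormedSpace 𝕜 E]

theorem norm_le_of_norm_sub_sq_le {x y : E} (h : ‖x - y‖ ^ 2 ≤ ‖x‖ ^ 2 - ‖y‖ ^ 2) :
    ‖y‖ ≤ ‖x‖ :=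
  (pow_le_pow_iff_left₀ (norm_nonneg y) (norm_nonneg x) two_ne_zero).mp
    (by nlinarith [sq_nonneg ‖x - y‖])

theorem eq_of_norm_sub_sq_le_of_norm_eq {x y : E} (h : ‖x - y‖ ^ 2 ≤ ‖x‖ ^ 2 - ‖y‖ ^ 2)
    (hxy : ‖y‖ = ‖x‖) : y = x := by
  rw [hxy, sub_self] at h
  exact (sub_eq_zero.mp (norm_eq_zero.mp (pow_eq_zero_iff two_ne_zero |>.mp
    (le_antisymm h (sq_nonneg _))))).symm

variable {l : List (E →L[𝕜] E)}

theorem norm_list_prod_apply_le (hl : ∀ T ∈ l, ∀ x, ‖x - T x‖ ^ 2 ≤ ‖x‖ ^ 2 - ‖T x‖ ^ 2)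
    (x : E) : ‖l.prod x‖ ≤ ‖x‖ := by
  induction l with
  | nil => simp
  | cons T l ih =>
    rw [List.forall_mem_cons] at hl
    exact (norm_le_of_norm_sub_sq_le (hl.1 _)).trans (ih hl.2)

theorem norm_sub_list_prod_apply_sq_le (hl : ∀ T ∈ l, ∀ x, ‖x - T x‖ ^ 2 ≤ ‖x‖ ^ 2 - ‖T x‖ ^ 2)
    (x : E) : ‖x - l.prod x‖ ^ 2 ≤ l.length * (‖x‖ ^ 2 - ‖l.prod x‖ ^ 2) := by
  induction l with
  | nil => simp
  | cons T l ih =>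
    rw [List.forall_mem_cons] at hl
    have hz : ‖l.prod x‖ ^ 2 ≤ ‖x‖ ^ 2 :=
      pow_le_pow_left₀ (norm_nonneg _) (norm_list_prod_apply_le hl.2 x) 2
    rw [List.prod_cons, mul_apply_eq_comp, List.length_cons, Nat.cast_succ,
      ← sub_add_sub_cancel (‖x‖ ^ 2) (‖l.prod x‖ ^ 2)]
    exact sq_le_succ_mul_add_of_le_add (Nat.cast_nonneg _) (sub_nonneg.mpr hz) (norm_nonneg _)
      (norm_sub_le_norm_sub_add_norm_sub _ _ _) (ih hl.2) (hl.1 _)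

theorem list_prod_apply_eq_self_iff (hl : ∀ T ∈ l, ∀ x, ‖x - T x‖ ^ 2 ≤ ‖x‖ ^ 2 - ‖T x‖ ^ 2)
    {x : E} : l.prod x = x ↔ ∀ T ∈ l, T x = x := by
  induction l with
  | nil => simp
  | cons T l ih =>
    rw [List.forall_mem_cons] at hl
    rw [List.prod_cons, mul_apply_eq_comp, List.forall_mem_cons, ← ih hl.2]
    refine ⟨fun hx => ?_, fun ⟨hTx, hlx⟩ => by rw [hlx, hTx]⟩
    have hnorm : ‖T (l.prod x)‖ = ‖l.prod x‖ :=
      le_antisymm (norm_le_of_norm_sub_sq_le (hl.1 _))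
        (by rw [hx]; exact norm_list_prod_apply_le hl.2 x)
    have hlx : l.prod x = x := (eq_of_norm_sub_sq_le_of_norm_eq (hl.1 _) hnorm).symm.trans hx
    rw [hlx] at hx
    exact ⟨hx, hlx⟩

theorem tendsto_pow_succ_apply_sub_pow_apply {T : E →L[𝕜] E} {c : ℝ}
    (hT : ∀ x, ‖T x‖ ≤ ‖x‖) (hc : ∀ x, ‖x - T x‖ ^ 2 ≤ c * (‖x‖ ^ 2 - ‖T x‖ ^ 2)) (x : E) :
    Tendsto (fun n => (T ^ (n + 1)) x - (T ^ n) x) atTop (𝓝 0) := by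
  set u : ℕ → ℝ := fun n => ‖(T ^ n) x‖ ^ 2
  have hsucc : ∀ n, (T ^ (n + 1)) x = T ((T ^ n) x) := fun n => by
    rw [pow_succ', mul_apply_eq_comp]
  have hu : Antitone u := antitone_nat_of_succ_le fun n => by
    simp only [u, hsucc]
    exact pow_le_pow_left₀ (norm_nonneg _) (hT _) 2
  have hlim : Tendsto u atTop (𝓝 (⨅ n, u n)) :=
    tendsto_atTop_ciInf hu ⟨0, by rintro _ ⟨n, rfl⟩; positivity⟩
  have hdiff : Tendsto (fun n => c * (u n - u (n + 1))) atTop (𝓝 0) := by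
    simpa using (hlim.sub (hlim.comp (tendsto_add_atTop_nat 1))).const_mul c
  refine squeeze_zero_norm (fun n => ?_) (by simpa using hdiff.sqrt)
  have h := hc ((T ^ n) x)
  rw [← hsucc] at h
  rw [norm_sub_rev]
  exact Real.le_sqrt_of_sq_le h

end NormedSpace

section InnerProductSpace

variable {𝕜 E : Type*} [RCLike 𝕜] [NormedAddCommGroup E] [InnerProductSpace 𝕜 E]

theorem Submodule.norm_sub_starProjection_apply_sq (K : Submodule 𝕜 E)
    [K.HasOrthogonalProjection] (x : E) :
    ‖x - K.starProjection x‖ ^ 2 = ‖x‖ ^ 2 - ‖K.starProjection x‖ ^ 2 := by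
  rw [K.norm_sq_eq_add_norm_sq_starProjection x, K.starProjection_orthogonal_val]
  ring

variable [CompleteSpace E]

theorem ContinuousLinearMap.orthogonal_eqLocus_one_le_topologicalClosure_range {T : E →L[𝕜] E}
    (hT : ‖T‖ ≤ 1) :
    ((T : E →ₗ[𝕜] E).eqLocus 1)ᗮ ≤
      (LinearMap.range ((T : E →ₗ[𝕜] E) - 1)).topologicalClosure := by
  rw [← Submodule.orthogonal_orthogonal_eq_closure]
  refine Submodule.orthogonal_le fun x hx ↦ eq_of_norm_le_re_inner_eq_norm_sq (𝕜 := 𝕜) ?_ ?_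
  · simpa using T.le_of_opNorm_le hT x
  · have : ∀ y, inner 𝕜 (T y) x = inner 𝕜 y x := by
      simpa [Submodule.mem_orthogonal, inner_sub_left, sub_eq_zero] using hx
    simp [this]

theorem ContinuousLinearMap.tendsto_pow_apply_starProjection {T : E →L[𝕜] E} (hT : ‖T‖ ≤ 1)
    (hreg : ∀ x, Tendsto (fun n => (T ^ (n + 1)) x - (T ^ n) x) atTop (𝓝 0))
    (K : Submodule 𝕜 E) [K.HasOrthogonalProjection] (hK : K = (T : E →ₗ[𝕜] E).eqLocus 1)
    (x : E) : Tendsto (fun n => (T ^ n) x) atTop (𝓝 (K.starProjection x)) := by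
  have hfix : ∀ n, (T ^ n) (K.starProjection x) = K.starProjection x := by
    have hmem : T (K.starProjection x) = K.starProjection x :=
      hK.le (K.starProjection_apply_mem x)
    intro n
    rw [FunLike.coe_pow_eq_iterate]
    exact Function.IsFixedPt.iterate hmem n
  have hclosed : IsClosed {y | Tendsto (fun n => (T ^ n) y) atTop (𝓝 0)} := by
    refine (LipschitzWith.uniformEquicontinuous (fun n => ⇑(T ^ n)) 1 fun n => ?_).equicontinuous
      |>.isClosed_setOfPred_tendsto continuous_const
    rw [FunLike.coe_pow_eq_iterate]
    simpa using (T.lipschitz.weaken (show ‖T‖₊ ≤ 1 from mod_cast hT)).iterate n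
  have hzero : Tendsto (fun n => (T ^ n) (x - K.starProjection x)) atTop (𝓝 0) := by
    refine closure_minimal ?_ hclosed <|
      T.orthogonal_eqLocus_one_le_topologicalClosure_range hT <|
        Submodule.orthogonal_le hK.ge (K.sub_starProjection_mem_orthogonal x)
    rintro _ ⟨y, rfl⟩
    simpa [pow_succ] using hreg y
  refine (zero_add (K.starProjection x) ▸ hzero.add_const (K.starProjection x)).congr fun n => ?_
  rw [map_sub, hfix, sub_add_cancel]

end InnerProductSpace

theorem halperin_cyclic_projections_tendsto_general
    {H : Type*} [NormedAddCommGroup H] [InnerProductSpace ℝ H] [CompleteSpace H]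
    {k : ℕ} (W : Fin k → Submodule ℝ H)
    [∀ i, Submodule.HasOrthogonalProjection (W i)]
    [Submodule.HasOrthogonalProjection (⨅ i, W i)]
    (P : Fin k → (H →L[ℝ] H))
    (hP : ∀ i, P i = (W i).subtypeL.comp (Submodule.orthogonalProjectionOnto (W i))) :
    ∀ x : H,
      Filter.Tendsto (fun q : ℕ => ((List.ofFn P).reverse.prod ^ q) x)
        Filter.atTop (nhds ((Submodule.orthogonalProjectionOnto (⨅ i, W i) x : H))) := by
  have hfirm : ∀ T ∈ (List.ofFn P).reverse, ∀ x, ‖x - T x‖ ^ 2 ≤ ‖x‖ ^ 2 - ‖T x‖ ^ 2 := by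
    simp only [List.mem_reverse, List.mem_ofFn, forall_exists_index, forall_apply_eq_imp_iff]
    intro i x
    rw [hP]
    exact ((W i).norm_sub_starProjection_apply_sq x).le
  have hnorm := norm_list_prod_apply_le hfirm
  have hfix : ⨅ i, W i = ((List.ofFn P).reverse.prod : H →ₗ[ℝ] H).eqLocus 1 := by
    ext x
    rw [Submodule.mem_iInf, LinearMap.mem_eqLocus, ContinuousLinearMap.coe_coe,
      Module.End.one_apply, list_prod_apply_eq_self_iff hfirm]
    simp only [List.mem_reverse, List.mem_ofFn, forall_exists_index, forall_apply_eq_imp_iff, hP]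
    exact forall_congr' fun i => Submodule.starProjection_eq_self_iff.symm
  have hT : ‖(List.ofFn P).reverse.prod‖ ≤ 1 :=
    ContinuousLinearMap.opNorm_le_bound _ zero_le_one fun x => by simpa using hnorm x
  have hreg := tendsto_pow_succ_apply_sub_pow_apply hnorm (norm_sub_list_prod_apply_sq_le hfirm)
  exact fun x => ContinuousLinearMap.tendsto_pow_apply_starProjection hT hreg _ hfix x

/-- **Halperin.** Let `M 1, …, M k` be closed subspaces of a real Hilbert space
`H`, `W = ⋂ i, M i`, and `P i` the orthogonal projection onto `M i`. Then for every `x ∈ H`,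
the iterated cyclic products of projections converge in norm:
`(P_k P_{k−1} ⋯ P_1)^q x → P_W x` as `q → ∞`. -/
theorem halperin_cyclic_projections_tendsto
    {H : Type*} [NormedAddCommGroup H] [InnerProductSpace ℝ H] [CompleteSpace H]
    {k : ℕ} (W : Fin k → Submodule ℝ H)
    (hclosed : ∀ i, IsClosed ((W i) : Set H))
    [∀ i, Submodule.HasOrthogonalProjection (W i)]
    [Submodule.HasOrthogonalProjection (⨅ i, W i)]
    (P : Fin k → (H →L[ℝ] H))
    (hP : ∀ i, P i = (W i).subtypeL.comp (Submodule.orthogonalProjectionOnto (W i))) :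
    ∀ x : H,
      Filter.Tendsto (fun q : ℕ => ((List.ofFn P).reverse.prod ^ q) x)
        Filter.atTop (nhds ((Submodule.orthogonalProjectionOnto (⨅ i, W i) x : H))) :=
  halperin_cyclic_projections_tendsto_general W P hP
end

section
/- (Galantai) Let A ∈ ℝ^{M×M} be invertible, x* the solution of the consistent system Ax = b, and A_1, …, A_k a row‑partition of A with A_i ∈ ℝ^{M_i×M} of full row rank and ∑ M_i = M. For each i let L_i be the lower‑triangular Cholesky factor with A_i A_iᵀ = L_i L_iᵀ, set X_i = A_iᵀ L_i^{−T} ∈ ℝ^{M×M_i}, and let X = [X_1, …, X_k] ∈ ℝ^{M×M} be the concatenation. Then for every x_0 and every integer q ≥ 1, the block Kaczmarz iterates satisfy ‖x_{qk} − x*‖₂² ≤ (1 − det(XᵀX))^q ‖x_0 − x*‖₂². -/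
/-!
Let `e_t = x_t - x*` and let `X_i` be the `i`-th column block of `X`. Since `X_iᵀ X_i = 1`, a
step is `e ↦ e - X_i X_iᵀ e`, an orthogonal projection, so `‖e‖²` drops by `‖X_iᵀ e‖²`. Collect
the coefficients `w_i = X_iᵀ e_i` removed during one sweep into a vector `w`. The relations
`e_0 = e_i + ∑_{j<i} X_j w_j` say `T w = Xᵀ e_0`, where `T` is `1` plus the strictly block-lower
part of `XᵀX`, a matrix of determinant `1`. Hence, with `Z = T⁻¹ Xᵀ`, one sweep gives
`‖e_k‖² = ‖e_0‖² - ‖Z e_0‖²`. In particular `ZᵀZ ≤ 1`, and `det (ZᵀZ) = det (XᵀX)`, so every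
eigenvalue of `ZᵀZ` lies in `[det (XᵀX), 1]` and `‖e_k‖² ≤ (1 - det (XᵀX)) ‖e_0‖²`.
-/

open Matrix
open scoped MatrixOrder

namespace Matrix

theorem IsLowerTriangular.isUnit_det {m K : Type*} [Fintype m] [LinearOrder m] [Field K]
    {L : Matrix m m K} (hL : L.IsLowerTriangular) (hdiag : ∀ r, L r r ≠ 0) : IsUnit L.det := by
  rw [det_of_isLowerTriangular L hL]
  exact (Finset.prod_ne_zero_iff.mpr fun r _ => hdiag r).isUnit

section Cholesky

variable {m n R : Type*} [Fintype m] [Fintype n] [DecidableEq m] [CommRing R]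
  {B : Matrix m n R} {L : Matrix m m R}

theorem transpose_mul_self_eq_one_of_mul_transpose_eq (h : B * Bᵀ = L * Lᵀ)
    (hL : IsUnit L.det) : (Bᵀ * Lᵀ⁻¹)ᵀ * (Bᵀ * Lᵀ⁻¹) = 1 := by
  rw [transpose_mul, transpose_transpose, transpose_nonsing_inv, transpose_transpose,
    Matrix.mul_assoc, ← Matrix.mul_assoc B, h, ← Matrix.mul_assoc, ← Matrix.mul_assoc L⁻¹,
    nonsing_inv_mul _ hL, one_mul, mul_nonsing_inv _ (by rwa [det_transpose])]

theorem transpose_mul_inv_mul_eq_mul_transpose (h : B * Bᵀ = L * Lᵀ) :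
    Bᵀ * (B * Bᵀ)⁻¹ * B = (Bᵀ * Lᵀ⁻¹) * (Bᵀ * Lᵀ⁻¹)ᵀ := by
  rw [transpose_mul, transpose_transpose, transpose_nonsing_inv, transpose_transpose, h,
    mul_inv_rev, Matrix.mul_assoc, Matrix.mul_assoc, Matrix.mul_assoc]

end Cholesky

theorem det_transpose_mul_self_eq {ι n R : Type*} [Fintype ι] [Fintype n] [DecidableEq ι]
    [DecidableEq n] [CommRing R] (Z : Matrix ι n R) (e : ι ≃ n) :
    det (Zᵀ * Z) = det (Z * Zᵀ) := by
  have h : Zᵀ * Z = Zᵀ.submatrix id e.symm * Z.submatrix e.symm id := by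
    rw [submatrix_mul_equiv, submatrix_id_id]
  rw [h, det_mul_comm, ← Equiv.coe_refl, submatrix_mul_equiv, det_submatrix_equiv_self]

theorem det_le_one_and_algebraMap_det_le {n : Type*} [Fintype n] [DecidableEq n]
    {P : Matrix n n ℝ} (hP0 : 0 ≤ P) (hP1 : P ≤ 1) :
    P.det ≤ 1 ∧ algebraMap ℝ (Matrix n n ℝ) P.det ≤ P := by
  have hH : P.IsHermitian := (nonneg_iff_posSemidef.mp hP0).isHermitian
  have hspec : ∀ i, 0 ≤ hH.eigenvalues i ∧ hH.eigenvalues i ≤ 1 := fun i =>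
    have hi := hH.eigenvalues_mem_spectrum_real i
    ⟨spectrum_nonneg_of_nonneg hP0 hi, (CFC.le_one_iff P hH).mp hP1 _ hi⟩
  have hprod : ∀ s : Finset n, ∏ i ∈ s, hH.eigenvalues i ≤ 1 := fun s =>
    Finset.prod_le_one (fun i _ => (hspec i).1) (fun i _ => (hspec i).2)
  have hdet : P.det = ∏ i, hH.eigenvalues i := by simpa using hH.det_eq_prod_eigenvalues
  refine ⟨hdet ▸ hprod _, ?_⟩
  rw [algebraMap_le_iff_le_spectrum (ha := hH), hH.spectrum_real_eq_range_eigenvalues]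
  rintro _ ⟨j, rfl⟩
  rw [hdet, ← Finset.mul_prod_erase _ _ (Finset.mem_univ j)]
  exact mul_le_of_le_one_right (hspec j).1 (hprod _)

theorem dotProduct_self_sub_mulVec_transpose_mulVec {n m : Type*} [Fintype n] [Fintype m]
    [DecidableEq m] {U : Matrix n m ℝ} (hU : Uᵀ * U = 1) (v : n → ℝ) :
    (v - U *ᵥ (Uᵀ *ᵥ v)) ⬝ᵥ (v - U *ᵥ (Uᵀ *ᵥ v)) = v ⬝ᵥ v - (Uᵀ *ᵥ v) ⬝ᵥ (Uᵀ *ᵥ v) := by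
  have hcross : v ⬝ᵥ (U *ᵥ (Uᵀ *ᵥ v)) = (Uᵀ *ᵥ v) ⬝ᵥ (Uᵀ *ᵥ v) := by
    rw [dotProduct_mulVec, ← mulVec_transpose]
  have hsq : (U *ᵥ (Uᵀ *ᵥ v)) ⬝ᵥ (U *ᵥ (Uᵀ *ᵥ v)) = (Uᵀ *ᵥ v) ⬝ᵥ (Uᵀ *ᵥ v) := by
    rw [dotProduct_mulVec, ← mulVec_transpose, mulVec_mulVec, hU, one_mulVec]
  rw [dotProduct_sub, sub_dotProduct, sub_dotProduct, dotProduct_comm (U *ᵥ _), hcross, hsq]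
  ring

section Blocks

variable {n : Type*} {k : ℕ} {κ : Fin k → Type*}

def colBlock {α : Type*} (X : Matrix n (Σ i, κ i) α) (i : Fin k) : Matrix n (κ i) α :=
  X.submatrix id (Sigma.mk i)

def strictBlockLower {α : Type*} [Zero α] (G : Matrix (Σ i, κ i) (Σ i, κ i) α) :
    Matrix (Σ i, κ i) (Σ i, κ i) α :=
  of fun p q => if q.1 < p.1 then G p q else 0

theorem det_one_add_strictBlockLower [∀ i, Fintype (κ i)] [∀ i, DecidableEq (κ i)]
    {R : Type*} [CommRing R] (G : Matrix (Σ i, κ i) (Σ i, κ i) R) :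
    det (1 + strictBlockLower G) = 1 := by
  have hT : (1 + strictBlockLower G).BlockTriangular (OrderDual.toDual ∘ Sigma.fst) := by
    intro p q hqp
    have hne : p ≠ q := fun h => lt_irrefl _ (h ▸ hqp)
    simp [strictBlockLower, one_apply_ne hne, not_lt_of_gt (show p.1 < q.1 from hqp)]
  rw [hT.det]
  refine Finset.prod_eq_one fun a _ => ?_
  suffices h : (1 + strictBlockLower G).toSquareBlock (OrderDual.toDual ∘ Sigma.fst) a = 1 by
    rw [h, det_one]
  ext ⟨p, hp⟩ ⟨q, hq⟩
  have hpq : p.1 = q.1 := OrderDual.toDual.injective (hp.trans hq.symm)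
  simp [toSquareBlock, toSquareBlockProp, strictBlockLower, hpq, one_apply]

end Blocks

end Matrix

namespace BlockKaczmarz

variable {n : Type*} [Fintype n] {k : ℕ} {κ : Fin k → Type*} [∀ i, Fintype (κ i)]

noncomputable def sweepMatrix [∀ i, DecidableEq (κ i)] (X : Matrix n (Σ i, κ i) ℝ) :
    Matrix (Σ i, κ i) n ℝ :=
  (1 + strictBlockLower (Xᵀ * X))⁻¹ * Xᵀ

theorem det_transpose_mul_self_sweepMatrix [∀ i, DecidableEq (κ i)] [DecidableEq n]
    {X : Matrix n (Σ i, κ i) ℝ} (e : (Σ i, κ i) ≃ n) :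
    ((sweepMatrix X)ᵀ * sweepMatrix X).det = (Xᵀ * X).det := by
  have hZZ : sweepMatrix X * (sweepMatrix X)ᵀ = (1 + strictBlockLower (Xᵀ * X))⁻¹ * (Xᵀ * X) *
      (1 + strictBlockLower (Xᵀ * X))⁻¹ᵀ := by
    simp only [sweepMatrix, transpose_mul, transpose_transpose, Matrix.mul_assoc]
  rw [det_transpose_mul_self_eq _ e, hZZ, det_mul, det_mul, det_transpose, det_nonsing_inv,
    det_one_add_strictBlockLower, Ring.inverse_one, one_mul, mul_one]

variable [NeZero k]

/-- The error `x_t - x*` of the block Kaczmarz iteration with initial error `u`, written in terms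
of the orthonormalized blocks `X_i`. -/
def error (X : Matrix n (Σ i, κ i) ℝ) (u : n → ℝ) : ℕ → n → ℝ
  | 0 => u
  | t + 1 =>
    error X u t - colBlock X (Fin.ofNat k t) *ᵥ ((colBlock X (Fin.ofNat k t))ᵀ *ᵥ error X u t)

/-- The vector `w = (X_iᵀ e_i)_i` of correction coefficients of the first sweep. -/
def sweepCoeff (X : Matrix n (Σ i, κ i) ℝ) (u : n → ℝ) : (Σ i, κ i) → ℝ :=
  fun p => ((colBlock X p.1)ᵀ *ᵥ error X u p.1) p.2

variable {X : Matrix n (Σ i, κ i) ℝ}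

theorem error_period_add (u : n → ℝ) (t : ℕ) : error X u (k + t) = error X (error X u k) t := by
  induction t with
  | zero => rfl
  | succ t ih =>
    have hcycle : Fin.ofNat k (k + t) = Fin.ofNat k t := by ext; simp
    rw [← add_assoc, error, error, ih, hcycle]

theorem eq_error {ε : ℕ → n → ℝ} (hε : ∀ t, ε (t + 1) =
      ε t - colBlock X (Fin.ofNat k t) *ᵥ ((colBlock X (Fin.ofNat k t))ᵀ *ᵥ ε t)) (t : ℕ) :
    ε t = error X (ε 0) t := by
  induction t with
  | zero => rfl
  | succ t ih => rw [hε, ih, error]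

theorem error_eq_sub_sum (u : n → ℝ) (t : ℕ) :
    error X u t = u - ∑ s ∈ Finset.range t,
      colBlock X (Fin.ofNat k s) *ᵥ ((colBlock X (Fin.ofNat k s))ᵀ *ᵥ error X u s) := by
  induction t with
  | zero => simp [error]
  | succ t ih => rw [Finset.sum_range_succ, error, sub_add_eq_sub_sub, ← ih]

variable [∀ i, DecidableEq (κ i)]

theorem error_dotProduct_self (hX : ∀ i, (colBlock X i)ᵀ * colBlock X i = 1)
    (u : n → ℝ) (t : ℕ) :
    error X u t ⬝ᵥ error X u t = u ⬝ᵥ u - ∑ s ∈ Finset.range t,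
      ((colBlock X (Fin.ofNat k s))ᵀ *ᵥ error X u s) ⬝ᵥ
        ((colBlock X (Fin.ofNat k s))ᵀ *ᵥ error X u s) := by
  induction t with
  | zero => simp [error]
  | succ t ih =>
    rw [Finset.sum_range_succ, error, dotProduct_self_sub_mulVec_transpose_mulVec (hX _), ih]
    ring

theorem one_add_strictBlockLower_mulVec_sweepCoeff (u : n → ℝ) :
    (1 + strictBlockLower (Xᵀ * X)) *ᵥ sweepCoeff X u = Xᵀ *ᵥ u := by
  ext ⟨i, r⟩
  set f : ℕ → ℝ := fun s => ((colBlock X i)ᵀ *ᵥ (colBlock X (Fin.ofNat k s) *ᵥ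
    ((colBlock X (Fin.ofNat k s))ᵀ *ᵥ error X u s))) r
  have hlower : (strictBlockLower (Xᵀ * X) *ᵥ sweepCoeff X u) ⟨i, r⟩ =
      ∑ s ∈ Finset.range i, f s := by
    have hblock : ∀ j, ∑ s : κ j, strictBlockLower (Xᵀ * X) ⟨i, r⟩ ⟨j, s⟩ * sweepCoeff X u ⟨j, s⟩ =
        if (j : ℕ) < i then f j else 0 := by
      intro j
      split_ifs with hj
      · simp only [strictBlockLower, of_apply, Fin.lt_def, if_pos hj, f]
        rw [Fin.ofNat_val_eq_self, mulVec_mulVec, mulVec]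
        rfl
      · simp only [strictBlockLower, of_apply, Fin.lt_def, if_neg hj, zero_mul,
          Finset.sum_const_zero]
    rw [mulVec, dotProduct, Fintype.sum_sigma, Finset.sum_congr rfl fun j _ => hblock j,
      Fin.sum_univ_eq_sum_range (fun s => if s < i then f s else 0), ← Finset.sum_filter]
    congr 1
    ext s
    simp only [Finset.mem_filter, Finset.mem_range]
    omega
  have hu : (Xᵀ *ᵥ u) ⟨i, r⟩ = sweepCoeff X u ⟨i, r⟩ + ∑ s ∈ Finset.range i, f s := by
    have h := error_eq_sub_sum (X := X) u i
    rw [eq_sub_iff_add_eq, add_comm] at h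
    change ((colBlock X i)ᵀ *ᵥ u) r = _
    conv_lhs => rw [← h]
    rw [mulVec_add, mulVec_sum, Pi.add_apply, Finset.sum_apply, add_comm]
    rfl
  rw [add_mulVec, one_mulVec, Pi.add_apply, hlower, hu]

theorem sweepCoeff_eq_mulVec (u : n → ℝ) : sweepCoeff X u = sweepMatrix X *ᵥ u := by
  rw [sweepMatrix, ← mulVec_mulVec, ← one_add_strictBlockLower_mulVec_sweepCoeff, mulVec_mulVec,
    nonsing_inv_mul _ (by rw [det_one_add_strictBlockLower]; exact isUnit_one), one_mulVec]

theorem error_period_dotProduct_self (hX : ∀ i, (colBlock X i)ᵀ * colBlock X i = 1)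
    (u : n → ℝ) :
    error X u k ⬝ᵥ error X u k = u ⬝ᵥ u - u ⬝ᵥ ((sweepMatrix X)ᵀ * sweepMatrix X) *ᵥ u := by
  have hw : u ⬝ᵥ ((sweepMatrix X)ᵀ * sweepMatrix X) *ᵥ u = sweepCoeff X u ⬝ᵥ sweepCoeff X u := by
    rw [sweepCoeff_eq_mulVec, ← mulVec_mulVec, dotProduct_mulVec, ← mulVec_transpose,
      transpose_transpose]
  rw [hw, error_dotProduct_self hX, ← Fin.sum_univ_eq_sum_range (fun s =>
    ((colBlock X (Fin.ofNat k s))ᵀ *ᵥ error X u s) ⬝ᵥ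
      ((colBlock X (Fin.ofNat k s))ᵀ *ᵥ error X u s))]
  conv_rhs => arg 2; rw [dotProduct, Fintype.sum_sigma]
  exact congrArg _ (Finset.sum_congr rfl fun j _ => by rw [Fin.ofNat_val_eq_self]; rfl)

theorem transpose_mul_self_sweepMatrix_le_one [DecidableEq n]
    (hX : ∀ i, (colBlock X i)ᵀ * colBlock X i = 1) :
    (sweepMatrix X)ᵀ * sweepMatrix X ≤ 1 := by
  refine PosSemidef.of_dotProduct_mulVec_nonneg ?_ fun v => ?_
  · exact isHermitian_one.sub (by simpa using isHermitian_conjTranspose_mul_self (sweepMatrix X))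
  · rw [star_trivial, sub_mulVec, one_mulVec, dotProduct_sub, ← error_period_dotProduct_self hX]
    exact dotProduct_self_star_nonneg _

theorem error_period_dotProduct_self_le (hX : ∀ i, (colBlock X i)ᵀ * colBlock X i = 1)
    (e : (Σ i, κ i) ≃ n) :
    (Xᵀ * X).det ≤ 1 ∧
      ∀ u, error X u k ⬝ᵥ error X u k ≤ (1 - (Xᵀ * X).det) * (u ⬝ᵥ u) := by
  classical
  have hP0 : 0 ≤ (sweepMatrix X)ᵀ * sweepMatrix X := by
    simpa using nonneg_iff_posSemidef.mpr (posSemidef_conjTranspose_mul_self (sweepMatrix X))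
  obtain ⟨hdet_le_one, hdet_le⟩ :=
    det_le_one_and_algebraMap_det_le hP0 (transpose_mul_self_sweepMatrix_le_one hX)
  rw [det_transpose_mul_self_sweepMatrix e] at hdet_le_one hdet_le
  refine ⟨hdet_le_one, fun u => ?_⟩
  have h := (le_iff.mp hdet_le).dotProduct_mulVec_nonneg u
  rw [star_trivial, sub_mulVec, dotProduct_sub, Algebra.algebraMap_eq_smul_one, smul_mulVec,
    one_mulVec, dotProduct_smul, smul_eq_mul] at h
  rw [error_period_dotProduct_self hX]
  linarith

theorem error_mul_period_dotProduct_self_le (hX : ∀ i, (colBlock X i)ᵀ * colBlock X i = 1)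
    (e : (Σ i, κ i) ≃ n) (u : n → ℝ) (q : ℕ) :
    error X u (q * k) ⬝ᵥ error X u (q * k) ≤ (1 - (Xᵀ * X).det) ^ q * (u ⬝ᵥ u) := by
  obtain ⟨hdet_le_one, hsweep⟩ := error_period_dotProduct_self_le hX e
  induction q generalizing u with
  | zero => simp [error]
  | succ q ih =>
    rw [add_mul, one_mul, add_comm, error_period_add, pow_succ, mul_assoc]
    exact (ih _).trans
      (mul_le_mul_of_nonneg_left (hsweep u) (pow_nonneg (sub_nonneg.mpr hdet_le_one) _))

end BlockKaczmarz

theorem galantai_block_kaczmarz_det_bound_general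
    {M k : ℕ} (hk : 0 < k) (m : Fin k → ℕ)
    (A : Matrix (Fin M) (Fin M) ℝ)
    (e : ((i : Fin k) × Fin (m i)) ≃ Fin M)
    (B : (i : Fin k) → Matrix (Fin (m i)) (Fin M) ℝ)
    (hB : ∀ (i : Fin k) (r : Fin (m i)), B i r = A (e ⟨i, r⟩))
    (L : (i : Fin k) → Matrix (Fin (m i)) (Fin (m i)) ℝ)
    (hlow : ∀ (i : Fin k) (r s : Fin (m i)), r < s → L i r s = 0)
    (hdiag : ∀ (i : Fin k) (r : Fin (m i)), 0 < L i r r)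
    (hchol : ∀ i : Fin k, B i * (B i)ᵀ = L i * (L i)ᵀ)
    (X : Matrix (Fin M) ((i : Fin k) × Fin (m i)) ℝ)
    (hX : ∀ (rw : Fin M) (i : Fin k) (s : Fin (m i)),
      X rw ⟨i, s⟩ = ((B i)ᵀ * ((L i)ᵀ)⁻¹) rw s)
    (b : Fin M → ℝ) (xstar : EuclideanSpace ℝ (Fin M))
    (hsol : A.mulVec xstar = b)
    (x : ℕ → EuclideanSpace ℝ (Fin M))
    (hx : ∀ (j : ℕ) (i : Fin k), (i : ℕ) = j % k →
      x (j + 1) = x j + (WithLp.equiv 2 (Fin M → ℝ)).symm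
        ((B i)ᵀ.mulVec ((B i * (B i)ᵀ)⁻¹.mulVec
          ((fun r => b (e ⟨i, r⟩)) - (B i).mulVec (x j))))) :
    ∀ q : ℕ, 1 ≤ q →
      ‖x (q * k) - xstar‖ ^ 2 ≤ (1 - (Xᵀ * X).det) ^ q * ‖x 0 - xstar‖ ^ 2 := by
  have : NeZero k := NeZero.of_pos hk
  have hL : ∀ i, IsUnit (L i).det := fun i =>
    IsLowerTriangular.isUnit_det (fun r s h => hlow i r s h) fun r => (hdiag i r).ne'
  have hcol : ∀ i, colBlock X i = (B i)ᵀ * ((L i)ᵀ)⁻¹ := fun i => by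
    ext r s
    exact hX r i s
  set ε : ℕ → Fin M → ℝ := fun j => WithLp.equiv 2 (Fin M → ℝ) (x j - xstar)
  have hstep : ∀ j, ε (j + 1) =
      ε j - colBlock X (Fin.ofNat k j) *ᵥ ((colBlock X (Fin.ofNat k j))ᵀ *ᵥ ε j) := by
    intro j
    have hres : (fun r => b (e ⟨Fin.ofNat k j, r⟩)) - (B _).mulVec (x j) = -(B _ *ᵥ ε j) := by
      ext r
      simp [ε, ← hsol, hB, mulVec, dotProduct_sub]
    have hj := hx j (Fin.ofNat k j) (by simp)
    rw [hres, mulVec_neg, mulVec_neg, mulVec_mulVec, mulVec_mulVec,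
      transpose_mul_inv_mul_eq_mul_transpose (hchol _), ← hcol] at hj
    ext c
    simp [ε, hj, ← mulVec_mulVec]
    ring
  have hnorm : ∀ j, ‖x j - xstar‖ ^ 2 = ε j ⬝ᵥ ε j := fun j => by
    rw [EuclideanSpace.real_norm_sq_eq]
    simp [ε, dotProduct, sq]
  intro q _
  rw [hnorm, hnorm, BlockKaczmarz.eq_error hstep]
  exact BlockKaczmarz.error_mul_period_dotProduct_self_le
    (fun i => hcol i ▸ transpose_mul_self_eq_one_of_mul_transpose_eq (hchol i) (hL i)) e _ q

/-- **Galantai.** Let `A : ℝ^{M×M}` be invertible, `x*` the solution of the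
consistent system `A x = b`, and `B 1, …, B k` a row-partition of `A` into full-row-rank
blocks `B i : ℝ^{M_i×M}` with `∑ M_i = M` (encoded by the equivalence `e`). For each `i`
let `L i` be the lower-triangular Cholesky factor with `B i (B i)ᵀ = L i (L i)ᵀ`, set
`X_i = (B i)ᵀ (L i)^{−T}`, and let `X = [X_1, …, X_k]` be the concatenation (columns indexed
by the disjoint union of the block row-index sets). Then for every `x 0` and every `q ≥ 1`,
the block Kaczmarz iterates satisfy
`‖x (qk) − x*‖² ≤ (1 − det (XᵀX))^q ‖x 0 − x*‖²`. -/
theorem galantai_block_kaczmarz_det_bound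
    {M k : ℕ} (hk : 0 < k) (m : Fin k → ℕ)
    (A : Matrix (Fin M) (Fin M) ℝ) (hA : IsUnit A.det)
    (e : ((i : Fin k) × Fin (m i)) ≃ Fin M)
    (B : (i : Fin k) → Matrix (Fin (m i)) (Fin M) ℝ)
    (hB : ∀ (i : Fin k) (r : Fin (m i)), B i r = A (e ⟨i, r⟩))
    (hrank : ∀ i, (B i).rank = m i)
    (L : (i : Fin k) → Matrix (Fin (m i)) (Fin (m i)) ℝ)
    (hlow : ∀ (i : Fin k) (r s : Fin (m i)), r < s → L i r s = 0)
    (hdiag : ∀ (i : Fin k) (r : Fin (m i)), 0 < L i r r)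
    (hchol : ∀ i : Fin k, B i * (B i)ᵀ = L i * (L i)ᵀ)
    (X : Matrix (Fin M) ((i : Fin k) × Fin (m i)) ℝ)
    (hX : ∀ (rw : Fin M) (i : Fin k) (s : Fin (m i)),
      X rw ⟨i, s⟩ = ((B i)ᵀ * ((L i)ᵀ)⁻¹) rw s)
    (b : Fin M → ℝ) (xstar : EuclideanSpace ℝ (Fin M))
    (hsol : A.mulVec xstar = b)
    (x : ℕ → EuclideanSpace ℝ (Fin M))
    (hx : ∀ (j : ℕ) (i : Fin k), (i : ℕ) = j % k →
      x (j + 1) = x j + (WithLp.equiv 2 (Fin M → ℝ)).symm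
        ((B i)ᵀ.mulVec ((B i * (B i)ᵀ)⁻¹.mulVec
          ((fun r => b (e ⟨i, r⟩)) - (B i).mulVec (x j))))) :
    ∀ q : ℕ, 1 ≤ q →
      ‖x (q * k) - xstar‖ ^ 2 ≤ (1 - (Xᵀ * X).det) ^ q * ‖x 0 - xstar‖ ^ 2 :=
  galantai_block_kaczmarz_det_bound_general hk m A e B hB L hlow hdiag hchol X hX b xstar hsol x hx
end

section
/- Let A ∈ ℝ^{M×M} be invertible with all rows having unit Euclidean norm, and let x* be the solution of the consistent system Ax = b. Then the simple cyclic Kaczmarz iterates (one row per step, cycling through all M rows) satisfy, for every integer q ≥ 1, ‖x_{qM} − x*‖₂² ≤ (1 − det(AAᵀ))^q ‖x_0 − x*‖₂². -/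
/-!
Fix one sweep, write `e k` for the error after `k` steps and `c k = ⟪a k, e k⟫`. Each step is an
orthogonal projection, so `‖e M‖² = ‖e 0‖² - ∑ c k²`. Unrolling the sweep gives `A e₀ = L c`,
where `L` is the lower-triangular part (diagonal included) of the Gram matrix `G = A Aᵀ`; as `G`
has unit diagonal, `det L = 1` and `G = L + Lᵀ - 1`. Hence `c = C e₀` for `C = L⁻¹ A`, and
`1 - C Cᵀ = (1 - L⁻¹)(1 - L⁻¹)ᵀ ≥ 0`. So the eigenvalues of `Cᵀ C` lie in `[0, 1]`, each one is at
least their product `det (Cᵀ C) = det G`, and `∑ c k² = ‖C e₀‖² ≥ det G ‖e₀‖²`. The same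
conjugation `0 ≤ L⁻¹ G L⁻ᵀ ≤ 1` gives `det G ≤ 1`, so the sweep bounds can be iterated.
-/

open Matrix Finset
open scoped MatrixOrder InnerProductSpace

theorem Finset.prod_le_of_nonneg_of_le_one {ι R : Type*} [DecidableEq ι] [CommSemiring R]
    [PartialOrder R] [IsOrderedRing R] {s : Finset ι} {f : ι → R}
    (h0 : ∀ j ∈ s, 0 ≤ f j) (h1 : ∀ j ∈ s, f j ≤ 1) {i : ι} (hi : i ∈ s) :
    ∏ j ∈ s, f j ≤ f i := by
  rw [← mul_prod_erase s f hi]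
  exact mul_le_of_le_one_right (h0 i hi) <|
    prod_le_one (fun j hj => h0 j (mem_of_mem_erase hj)) (fun j hj => h1 j (mem_of_mem_erase hj))

theorem Fin.sum_univ_ite_le_eq_sum_range {M : ℕ} {R : Type*} [AddCommMonoid R] (f : ℕ → R)
    (i : Fin M) : ∑ j : Fin M, (if j ≤ i then f j else 0) = ∑ j ∈ range (i + 1), f j := by
  simp only [Fin.le_iff_val_le_val]
  rw [Fin.sum_univ_eq_sum_range (fun j => if j ≤ (i : ℕ) then f j else 0), ← sum_filter]
  congr 1
  ext j
  simp only [mem_filter, mem_range]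
  omega

namespace Matrix

section Spectral

variable {n : Type*} [Fintype n]

theorem transpose_mul_self_nonneg (C : Matrix n n ℝ) : 0 ≤ Cᵀ * C := by
  simpa [conjTranspose_eq_transpose_of_trivial] using
    nonneg_iff_posSemidef.mpr (posSemidef_conjTranspose_mul_self C)

variable [DecidableEq n]

theorem IsHermitian.eigenvalues_mem_Icc {T : Matrix n n ℝ} (hT : T.IsHermitian) (h0 : 0 ≤ T)
    (h1 : T ≤ 1) (i : n) : hT.eigenvalues i ∈ Set.Icc 0 1 := by
  have hspec := hT.eigenvalues_mem_spectrum_real i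
  rw [← map_zero (algebraMap ℝ (Matrix n n ℝ)), algebraMap_le_iff_le_spectrum] at h0
  rw [← map_one (algebraMap ℝ (Matrix n n ℝ)), le_algebraMap_iff_spectrum_le] at h1
  exact ⟨h0 _ hspec, h1 _ hspec⟩

theorem det_le_one_of_le_one {T : Matrix n n ℝ} (h0 : 0 ≤ T) (h1 : T ≤ 1) : T.det ≤ 1 := by
  have hT : T.IsHermitian := (nonneg_iff_posSemidef.mp h0).isHermitian
  have hev := hT.eigenvalues_mem_Icc h0 h1
  rw [hT.det_eq_prod_eigenvalues]
  simp only [RCLike.ofReal_real_eq_id, id_eq]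
  exact prod_le_one (fun i _ => (hev i).1) fun i _ => (hev i).2

theorem algebraMap_det_le_of_le_one {T : Matrix n n ℝ} (h0 : 0 ≤ T) (h1 : T ≤ 1) :
    algebraMap ℝ _ T.det ≤ T := by
  have hT : T.IsHermitian := (nonneg_iff_posSemidef.mp h0).isHermitian
  have hev := hT.eigenvalues_mem_Icc h0 h1
  rw [algebraMap_le_iff_le_spectrum, hT.spectrum_real_eq_range_eigenvalues]
  rintro _ ⟨i, rfl⟩
  rw [hT.det_eq_prod_eigenvalues]
  simp only [RCLike.ofReal_real_eq_id, id_eq]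
  exact prod_le_of_nonneg_of_le_one (fun j _ => (hev j).1) (fun j _ => (hev j).2) (mem_univ i)

theorem transpose_mul_self_le_one {C : Matrix n n ℝ} (h : C * Cᵀ ≤ 1) : Cᵀ * C ≤ 1 := by
  rw [← map_one (algebraMap ℝ (Matrix n n ℝ))] at h ⊢
  rw [le_algebraMap_iff_spectrum_le (isHermitian_iff_isSymm.mpr (isSymm_mul_transpose_self C))] at h
  rw [le_algebraMap_iff_spectrum_le (isHermitian_iff_isSymm.mpr (isSymm_transpose_mul_self C))]
  intro x hx
  by_cases hx0 : x = 0
  · exact hx0 ▸ zero_le_one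
  · have hx' : x ∈ spectrum ℝ (Cᵀ * C) \ {0} := ⟨hx, hx0⟩
    rw [spectrum.nonzero_mul_comm] at hx'
    exact h x hx'.1

theorem det_sq_mul_dotProduct_le {C : Matrix n n ℝ} (h : C * Cᵀ ≤ 1) (x : n → ℝ) :
    C.det ^ 2 * (x ⬝ᵥ x) ≤ (C *ᵥ x) ⬝ᵥ (C *ᵥ x) := by
  have hle := algebraMap_det_le_of_le_one C.transpose_mul_self_nonneg (transpose_mul_self_le_one h)
  rw [det_mul, det_transpose, ← sq, le_iff] at hle
  have := hle.dotProduct_mulVec_nonneg x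
  rwa [star_trivial, sub_mulVec, dotProduct_sub, ← mulVec_mulVec, dotProduct_mulVec,
    vecMul_transpose, Algebra.algebraMap_eq_smul_one, smul_mulVec, one_mulVec, dotProduct_smul,
    smul_eq_mul, sub_nonneg] at this

end Spectral

section LowerTriangularPart

variable {n R : Type*} [LinearOrder n] [CommRing R]

def lowerTriangularPart (G : Matrix n n R) : Matrix n n R :=
  of fun i j => if j ≤ i then G i j else 0

theorem lowerTriangularPart_isLowerTriangular (G : Matrix n n R) :
    G.lowerTriangularPart.IsLowerTriangular := fun _ _ hij => if_neg (not_le.2 hij)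

theorem lowerTriangularPart_add_transpose {G : Matrix n n R} (hG : G.IsSymm) :
    G.lowerTriangularPart + G.lowerTriangularPartᵀ = G + diagonal G.diag := by
  ext i j
  rcases lt_trichotomy i j with h | rfl | h
  · simp [lowerTriangularPart, h.not_ge, h.le, h.ne, hG.apply i j]
  · simp [lowerTriangularPart]
  · simp [lowerTriangularPart, h.not_ge, h.le, h.ne']

variable [Fintype n]

theorem det_lowerTriangularPart (G : Matrix n n R) :
    G.lowerTriangularPart.det = ∏ i, G i i := by
  rw [det_of_isLowerTriangular _ G.lowerTriangularPart_isLowerTriangular]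
  simp [lowerTriangularPart]

theorem one_sub_inv_mul_mul_inv_transpose {L : Matrix n n R} (hL : IsUnit L.det) :
    1 - L⁻¹ * (L + Lᵀ - 1) * L⁻¹ᵀ = (1 - L⁻¹) * (1 - L⁻¹)ᵀ := by
  have h1 : L⁻¹ * L = 1 := nonsing_inv_mul L hL
  have h2 : Lᵀ * L⁻¹ᵀ = 1 := by rw [← transpose_mul, h1, transpose_one]
  calc 1 - L⁻¹ * (L + Lᵀ - 1) * L⁻¹ᵀ
      = 1 - L⁻¹ * L * L⁻¹ᵀ - L⁻¹ * (Lᵀ * L⁻¹ᵀ) + L⁻¹ * L⁻¹ᵀ := by noncomm_ring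
    _ = (1 - L⁻¹) * (1 - L⁻¹)ᵀ := by
      rw [h1, h2, transpose_sub, transpose_one]; noncomm_ring

end LowerTriangularPart

section UnitDiagonal

variable {n : Type*} [Fintype n] [LinearOrder n] {G : Matrix n n ℝ}

theorem det_lowerTriangularPart_eq_one (hdiag : ∀ i, G i i = 1) :
    G.lowerTriangularPart.det = 1 := by
  simp [det_lowerTriangularPart, hdiag]

theorem inv_lowerTriangularPart_conj_le_one (hG : G.IsSymm) (hdiag : ∀ i, G i i = 1) :
    G.lowerTriangularPart⁻¹ * G * G.lowerTriangularPart⁻¹ᵀ ≤ 1 := by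
  have hL : IsUnit G.lowerTriangularPart.det := by simp [det_lowerTriangularPart_eq_one hdiag]
  have hGL : G = G.lowerTriangularPart + G.lowerTriangularPartᵀ - 1 := by
    rw [lowerTriangularPart_add_transpose hG, add_sub_assoc, left_eq_add, sub_eq_zero]
    ext i j
    simp [diagonal, one_apply, hdiag]
  rw [le_iff]
  nth_rw 2 [hGL]
  rw [one_sub_inv_mul_mul_inv_transpose hL]
  have := posSemidef_self_mul_conjTranspose (1 - G.lowerTriangularPart⁻¹)
  rwa [conjTranspose_eq_transpose_of_trivial] at this

theorem det_le_one_of_diag_eq_one (hG : 0 ≤ G) (hdiag : ∀ i, G i i = 1) : G.det ≤ 1 := by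
  have hpsd := nonneg_iff_posSemidef.mp hG
  have h0 := hpsd.mul_mul_conjTranspose_same G.lowerTriangularPart⁻¹
  rw [conjTranspose_eq_transpose_of_trivial, ← nonneg_iff_posSemidef] at h0
  have := det_le_one_of_le_one h0
    (inv_lowerTriangularPart_conj_le_one (isHermitian_iff_isSymm.mp hpsd.isHermitian) hdiag)
  rwa [det_mul, det_mul, det_transpose, det_nonsing_inv, det_lowerTriangularPart_eq_one hdiag,
    Ring.inverse_one, one_mul, mul_one] at this

end UnitDiagonal

end Matrix

section Sweep

variable {E : Type*} [NormedAddCommGroup E] [InnerProductSpace ℝ E]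

theorem norm_sub_inner_smul_sq {a : E} (ha : ‖a‖ = 1) (v : E) :
    ‖v - ⟪a, v⟫_ℝ • a‖ ^ 2 = ‖v‖ ^ 2 - ⟪a, v⟫_ℝ ^ 2 := by
  rw [norm_sub_sq_real, inner_smul_right, norm_smul, ha, real_inner_comm, Real.norm_eq_abs,
    mul_one, sq_abs]
  ring

variable {a e : ℕ → E}

theorem sweep_eq_sub_sum (he : ∀ k, e (k + 1) = e k - ⟪a k, e k⟫_ℝ • a k) (k : ℕ) :
    e k = e 0 - ∑ j ∈ range k, ⟪a j, e j⟫_ℝ • a j := by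
  induction k with
  | zero => simp
  | succ k ih => rw [he, ih, sum_range_succ, sub_sub, ← ih]

theorem inner_sweep_start (he : ∀ k, e (k + 1) = e k - ⟪a k, e k⟫_ℝ • a k) {k : ℕ}
    (hak : ‖a k‖ = 1) : ⟪a k, e 0⟫_ℝ = ∑ j ∈ range (k + 1), ⟪a k, a j⟫_ℝ * ⟪a j, e j⟫_ℝ := by
  have h := congrArg (⟪a k, ·⟫_ℝ) (sweep_eq_sub_sum he k)
  simp only [inner_sub_right, inner_sum, inner_smul_right] at h
  rw [sum_range_succ, real_inner_self_eq_norm_sq, hak, one_pow, one_mul]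
  simp only [mul_comm (⟪a k, a _⟫_ℝ)]
  linarith

theorem norm_sq_sweep (he : ∀ k, e (k + 1) = e k - ⟪a k, e k⟫_ℝ • a k) (ha : ∀ k, ‖a k‖ = 1)
    (k : ℕ) : ‖e k‖ ^ 2 = ‖e 0‖ ^ 2 - ∑ j ∈ range k, ⟪a j, e j⟫_ℝ ^ 2 := by
  induction k with
  | zero => simp
  | succ k ih => rw [he, norm_sub_inner_smul_sq (ha k), ih, sum_range_succ, sub_sub]

end Sweep

section Kaczmarz

variable {ι : Type*} [Fintype ι]

theorem EuclideanSpace.norm_sq_eq_dotProduct (v : EuclideanSpace ℝ ι) : ‖v‖ ^ 2 = v ⬝ᵥ v := by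
  rw [← real_inner_self_eq_norm_sq, EuclideanSpace.inner_eq_star_dotProduct, star_trivial]

theorem EuclideanSpace.inner_toLp_eq_mulVec {m : Type*} (A : Matrix m ι ℝ) (i : m)
    (v : EuclideanSpace ℝ ι) : ⟪WithLp.toLp 2 (A i), v⟫_ℝ = (A *ᵥ v) i := by
  simp [EuclideanSpace.inner_eq_star_dotProduct, dotProduct_comm, mulVec]

theorem kaczmarz_update_sub_eq {m : Type*} (A : Matrix m ι ℝ) {b : m → ℝ}
    {xstar : EuclideanSpace ℝ ι} (hsol : A *ᵥ xstar = b) {i : m}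
    (hi : ∑ c, A i c ^ 2 = 1) (y : EuclideanSpace ℝ ι) :
    y + ((b i - ∑ c, A i c * y c) / ∑ c, A i c ^ 2) • (WithLp.equiv 2 (ι → ℝ)).symm (A i)
      - xstar = (y - xstar) - ⟪WithLp.toLp 2 (A i), y - xstar⟫_ℝ • WithLp.toLp 2 (A i) := by
  rw [hi, div_one, EuclideanSpace.inner_toLp_eq_mulVec, WithLp.ofLp_sub, mulVec_sub, hsol]
  simp only [WithLp.equiv_symm_apply, Pi.sub_apply, mulVec, dotProduct]
  module

theorem norm_sq_kaczmarz_sweep_le {M : ℕ} (A : Matrix (Fin M) (Fin M) ℝ)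
    {a e : ℕ → EuclideanSpace ℝ (Fin M)} (hA : ∀ i : Fin M, a i = WithLp.toLp 2 (A i))
    (ha : ∀ k, ‖a k‖ = 1) (he : ∀ k, e (k + 1) = e k - ⟪a k, e k⟫_ℝ • a k) :
    ‖e M‖ ^ 2 ≤ (1 - (A * Aᵀ).det) * ‖e 0‖ ^ 2 := by
  set G := A * Aᵀ
  set L := G.lowerTriangularPart
  set c : Fin M → ℝ := fun j => ⟪a j, e j⟫_ℝ
  have hG : ∀ i j : Fin M, G i j = ⟪a i, a j⟫_ℝ := fun i j => by
    rw [hA, EuclideanSpace.inner_toLp_eq_mulVec, hA]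
    simp [G, mul_apply, mulVec, dotProduct]
  have hdiag : ∀ i, G i i = 1 := fun i => by rw [hG, real_inner_self_eq_norm_sq, ha, one_pow]
  have hL : L.det = 1 := det_lowerTriangularPart_eq_one hdiag
  have hLc : L *ᵥ c = A *ᵥ e 0 := by
    ext i
    rw [← EuclideanSpace.inner_toLp_eq_mulVec, ← hA, inner_sweep_start he (ha i),
      ← Fin.sum_univ_ite_le_eq_sum_range]
    simp [mulVec, dotProduct, L, lowerTriangularPart, hG, ite_mul, c]
  have hc : c = (L⁻¹ * A) *ᵥ e 0 := by
    rw [← mulVec_mulVec, ← hLc, mulVec_mulVec, nonsing_inv_mul _ (by simp [hL]), one_mulVec]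
  have hCC : (L⁻¹ * A) * (L⁻¹ * A)ᵀ ≤ 1 := by
    rw [transpose_mul, ← Matrix.mul_assoc, Matrix.mul_assoc L⁻¹ A]
    exact inv_lowerTriangularPart_conj_le_one (isSymm_mul_transpose_self A) hdiag
  have hdet : (L⁻¹ * A).det ^ 2 = G.det := by
    rw [det_mul, det_nonsing_inv, hL, Ring.inverse_one, one_mul, sq, det_mul, det_transpose]
  have hcoeff : ∑ j ∈ range M, ⟪a j, e j⟫_ℝ ^ 2 = c ⬝ᵥ c := by
    rw [← Fin.sum_univ_eq_sum_range]; simp [dotProduct, sq, c]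
  have key := det_sq_mul_dotProduct_le hCC (e 0)
  rw [← hc, hdet, ← hcoeff] at key
  rw [norm_sq_sweep he ha, EuclideanSpace.norm_sq_eq_dotProduct (e 0)]
  linarith

end Kaczmarz

theorem simple_kaczmarz_det_bound_general
    {M : ℕ} (hM : 0 < M)
    (A : Matrix (Fin M) (Fin M) ℝ)
    (hrows : ∀ i, ∑ j, A i j ^ 2 = 1)
    (b : Fin M → ℝ) (xstar : EuclideanSpace ℝ (Fin M))
    (hsol : A.mulVec xstar = b)
    (x : ℕ → EuclideanSpace ℝ (Fin M))
    (hx : ∀ (j : ℕ) (i : Fin M), (i : ℕ) = j % M →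
      x (j + 1) = x j + ((b i - ∑ c, A i c * x j c) / ∑ c, A i c ^ 2) •
        (WithLp.equiv 2 (Fin M → ℝ)).symm (A i)) :
    ∀ q : ℕ, 1 ≤ q →
      ‖x (q * M) - xstar‖ ^ 2 ≤ (1 - (A * Aᵀ).det) ^ q * ‖x 0 - xstar‖ ^ 2 := by
  intro q _
  let row : ℕ → EuclideanSpace ℝ (Fin M) := fun k => WithLp.toLp 2 (A ⟨k % M, Nat.mod_lt k hM⟩)
  have hrow : ∀ k, ‖row k‖ = 1 := fun k => by simp [row, EuclideanSpace.norm_eq, hrows]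
  have herr : ∀ j, x (j + 1) - xstar = (x j - xstar) - ⟪row j, x j - xstar⟫_ℝ • row j :=
    fun j => by
      rw [hx j ⟨j % M, Nat.mod_lt j hM⟩ rfl]
      exact kaczmarz_update_sub_eq A hsol (hrows _) (x j)
  have hsweep : ∀ p, ‖x ((p + 1) * M) - xstar‖ ^ 2
      ≤ (1 - (A * Aᵀ).det) * ‖x (p * M) - xstar‖ ^ 2 := fun p => by
    have := norm_sq_kaczmarz_sweep_le A (a := row) (e := fun k => x (p * M + k) - xstar)
      (fun i => by simp [row, Nat.mod_eq_of_lt i.2]) hrow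
      (fun k => by simpa [row, ← add_assoc, Nat.mul_add_mod] using herr (p * M + k))
    simpa [add_mul, add_comm] using this
  have hdet : (A * Aᵀ).det ≤ 1 :=
    det_le_one_of_diag_eq_one (by simpa using Aᵀ.transpose_mul_self_nonneg)
      fun i => by rw [← hrows i]; simp [mul_apply, sq]
  simpa using le_geom (u := fun p => ‖x (p * M) - xstar‖ ^ 2) (sub_nonneg.2 hdet) q
    fun p _ => hsweep p

/-- Let `A : ℝ^{M×M}` be invertible with all rows of unit Euclidean norm,
and let `x*` be the solution of the consistent system `A x = b`. Then the simple cyclic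
Kaczmarz iterates `x_{j+1} = x_j + ((b_i − ⟨a_i, x_j⟩)/‖a_i‖²) a_i`, `i = j mod M`, satisfy
`‖x (qM) − x*‖² ≤ (1 − det (A Aᵀ))^q ‖x 0 − x*‖²` for every `q ≥ 1`. -/
theorem simple_kaczmarz_det_bound
    {M : ℕ} (hM : 0 < M)
    (A : Matrix (Fin M) (Fin M) ℝ) (hA : IsUnit A.det)
    (hrows : ∀ i, ∑ j, A i j ^ 2 = 1)
    (b : Fin M → ℝ) (xstar : EuclideanSpace ℝ (Fin M))
    (hsol : A.mulVec xstar = b)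
    (x : ℕ → EuclideanSpace ℝ (Fin M))
    (hx : ∀ (j : ℕ) (i : Fin M), (i : ℕ) = j % M →
      x (j + 1) = x j + ((b i - ∑ c, A i c * x j c) / ∑ c, A i c ^ 2) •
        (WithLp.equiv 2 (Fin M → ℝ)).symm (A i)) :
    ∀ q : ℕ, 1 ≤ q →
      ‖x (q * M) - xstar‖ ^ 2 ≤ (1 - (A * Aᵀ).det) ^ q * ‖x 0 - xstar‖ ^ 2 :=
  simple_kaczmarz_det_bound_general hM A hrows b xstar hsol x hx
end

section
/- (Strohmer–Vershynin, one step) Let A ∈ ℝ^{M×N} have full column rank with nonzero rows a_1, …, a_M, let ‖A‖_F be its Frobenius norm and σ_min(A) its smallest singular value. For a randomized Kaczmarz step that selects row i with probability p_i = ‖a_i‖₂²/‖A‖_F² and replaces the current error e ∈ ℝ^N by (I − P_i)e, where P_i is the orthogonal projection onto span(a_i), the expected squared error after one step satisfies ∑_{i=1}^{M} p_i ‖(I − P_i)e‖₂² ≤ (1 − σ_min(A)²/‖A‖_F²) ‖e‖₂² = (1 − κ(A)^{−2}) ‖e‖₂². -/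
open Matrix
open scoped RealInnerProductSpace

/-!
Each step is an orthogonal projection, so by Pythagoras
`‖(I - P i) e‖² = ‖e‖² - ⟪a i, e⟫² / ‖a i‖²`. Weighting by `‖a i‖² / ‖A‖_F²` cancels the
denominators: the expected decrease is `∑ i, ⟪a i, e⟫² / ‖A‖_F² = ‖A e‖² / ‖A‖_F²`, and
`‖A e‖ ≥ σ ‖e‖` because `σ` is the infimum of `‖A x‖` on the unit sphere.
-/

theorem sInf_norm_image_sphere_mul_norm_le {E F : Type*} [NormedAddCommGroup E] [NormedSpace ℝ E]
    [NormedAddCommGroup F] [NormedSpace ℝ F] (T : E →ₗ[ℝ] F) (x : E) :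
    sInf ((fun y => ‖T y‖) '' {y | ‖y‖ = 1}) * ‖x‖ ≤ ‖T x‖ := by
  rcases eq_or_ne x 0 with rfl | hx
  · simp
  have hx' : 0 < ‖x‖ := norm_pos_iff.mpr hx
  have hunit : ‖‖x‖⁻¹ • x‖ = 1 := by
    rw [norm_smul, norm_inv, norm_norm, inv_mul_cancel₀ hx'.ne']
  have hbdd : BddBelow ((fun y => ‖T y‖) '' {y | ‖y‖ = 1}) :=
    ⟨0, by rintro _ ⟨y, -, rfl⟩; positivity⟩
  have hle : _ ≤ ‖T (‖x‖⁻¹ • x)‖ := csInf_le hbdd ⟨_, hunit, rfl⟩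
  rw [map_smul, norm_smul, norm_inv, norm_norm] at hle
  rwa [le_inv_mul_iff₀ hx', mul_comm] at hle

section InnerProductSpace

variable {E : Type*} [NormedAddCommGroup E] [InnerProductSpace ℝ E]

-- For `a = 0` both sides are `‖w‖ ^ 2`, as `x / 0 = 0`.
theorem norm_sub_inner_div_smul_sq (a w : E) :
    ‖w - (⟪a, w⟫ / ‖a‖ ^ 2) • a‖ ^ 2 = ‖w‖ ^ 2 - ⟪a, w⟫ ^ 2 / ‖a‖ ^ 2 := by
  rcases eq_or_ne a 0 with rfl | ha
  · simp
  have ha' : ‖a‖ ^ 2 ≠ 0 := by positivity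
  rw [norm_sub_sq_real, real_inner_smul_right, norm_smul, mul_pow, Real.norm_eq_abs, sq_abs,
    real_inner_comm]
  field_simp
  ring

theorem sum_norm_sq_div_mul_norm_sub_inner_div_smul_sq_le {ι : Type*} [Fintype ι]
    (a : ι → E) (w : E) :
    ∑ i, ‖a i‖ ^ 2 / (∑ k, ‖a k‖ ^ 2) * ‖w - (⟪a i, w⟫ / ‖a i‖ ^ 2) • a i‖ ^ 2 ≤
      ‖w‖ ^ 2 - (∑ i, ⟪a i, w⟫ ^ 2) / ∑ k, ‖a k‖ ^ 2 := by
  set F := ∑ k, ‖a k‖ ^ 2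
  have hterm : ∀ i, ‖a i‖ ^ 2 / F * ‖w - (⟪a i, w⟫ / ‖a i‖ ^ 2) • a i‖ ^ 2 =
      ‖a i‖ ^ 2 / F * ‖w‖ ^ 2 - ⟪a i, w⟫ ^ 2 / F := by
    intro i
    rw [norm_sub_inner_div_smul_sq]
    rcases eq_or_ne (a i) 0 with ha | ha
    · simp [ha]
    · field_simp
  have hweights : (∑ i, ‖a i‖ ^ 2) / F ≤ 1 := div_self_le_one _
  simp only [hterm, Finset.sum_sub_distrib, ← Finset.sum_mul, ← Finset.sum_div]
  gcongr
  nlinarith [sq_nonneg ‖w‖]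

end InnerProductSpace

theorem Matrix.norm_toLp_mulVec_sq {m n : Type*} [Fintype m] [Fintype n]
    (A : Matrix m n ℝ) (x : EuclideanSpace ℝ n) :
    ‖WithLp.toLp 2 (A *ᵥ x)‖ ^ 2 = ∑ i, ⟪(WithLp.toLp 2 (A i) : EuclideanSpace ℝ n), x⟫ ^ 2 := by
  rw [EuclideanSpace.real_norm_sq_eq]
  simp [EuclideanSpace.inner_eq_star_dotProduct, mulVec, dotProduct_comm]

theorem randomized_kaczmarz_one_step_expected_error_general
    {M N : ℕ}
    (A : Matrix (Fin M) (Fin N) ℝ)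
    (σ : ℝ)
    (hσ : σ = sInf ((fun x : EuclideanSpace ℝ (Fin N) =>
      ‖(WithLp.equiv 2 (Fin M → ℝ)).symm (A.mulVec x)‖) '' {x | ‖x‖ = 1}))
    (p : Fin M → ℝ)
    (hp : ∀ i, p i = (∑ j, A i j ^ 2) / (∑ i, ∑ j, A i j ^ 2))
    (P : Fin M → EuclideanSpace ℝ (Fin N) → EuclideanSpace ℝ (Fin N))
    (hP : ∀ (i : Fin M) (v : EuclideanSpace ℝ (Fin N)),
      P i v = ((∑ j, A i j * v j) / ∑ j, A i j ^ 2) • (WithLp.equiv 2 (Fin N → ℝ)).symm (A i))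
    (e : EuclideanSpace ℝ (Fin N)) :
    ∑ i, p i * ‖e - P i e‖ ^ 2 ≤ (1 - σ ^ 2 / ∑ i, ∑ j, A i j ^ 2) * ‖e‖ ^ 2 := by
  set a : Fin M → EuclideanSpace ℝ (Fin N) := fun i => WithLp.toLp 2 (A i)
  have hnorm (i : Fin M) : ∑ j, A i j ^ 2 = ‖a i‖ ^ 2 :=
    (EuclideanSpace.real_norm_sq_eq (a i)).symm
  have hinner (i : Fin M) (v : EuclideanSpace ℝ (Fin N)) : ∑ j, A i j * v j = ⟪a i, v⟫ := by
    simp [a, EuclideanSpace.inner_eq_star_dotProduct, dotProduct, mul_comm]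
  have hσ_nonneg : 0 ≤ σ := hσ ▸ Real.sInf_nonneg (by rintro _ ⟨x, -, rfl⟩; positivity)
  have hσ_le : σ ^ 2 * ‖e‖ ^ 2 ≤ ∑ i, ⟪a i, e⟫ ^ 2 := by
    rw [← Matrix.norm_toLp_mulVec_sq, ← mul_pow]
    gcongr
    exact hσ ▸ sInf_norm_image_sphere_mul_norm_le (Matrix.toLpLin 2 2 A) e
  simp only [hp, hP, hnorm, hinner]
  calc _ ≤ ‖e‖ ^ 2 - (∑ i, ⟪a i, e⟫ ^ 2) / ∑ i, ‖a i‖ ^ 2 :=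
        sum_norm_sq_div_mul_norm_sub_inner_div_smul_sq_le a e
    _ ≤ _ := by
      rw [sub_mul, one_mul, div_mul_eq_mul_div]
      gcongr

/-- **Strohmer–Vershynin, one step.** Let `A : ℝ^{M×N}` have full column rank
with nonzero rows, let `∑ i j, A i j ^ 2` be its squared Frobenius norm and `σ` its smallest
singular value (the infimum of `‖A x‖` over the Euclidean unit sphere). For a randomized
Kaczmarz step selecting row `i` with probability `p i = ‖a_i‖² / ‖A‖_F²` and replacing the
current error `e` by `(I − P_i) e`, where `P_i` is the orthogonal projection onto
`span (a_i)`, the expected squared error after one step satisfies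
`∑ i, p i ‖(I − P_i) e‖² ≤ (1 − σ² / ‖A‖_F²) ‖e‖² = (1 − κ(A)⁻²) ‖e‖²`. -/
theorem randomized_kaczmarz_one_step_expected_error
    {M N : ℕ}
    (A : Matrix (Fin M) (Fin N) ℝ) (hrank : A.rank = N)
    (hrows : ∀ i, A i ≠ 0)
    (σ : ℝ)
    (hσ : σ = sInf ((fun x : EuclideanSpace ℝ (Fin N) =>
      ‖(WithLp.equiv 2 (Fin M → ℝ)).symm (A.mulVec x)‖) '' {x | ‖x‖ = 1}))
    (p : Fin M → ℝ)
    (hp : ∀ i, p i = (∑ j, A i j ^ 2) / (∑ i, ∑ j, A i j ^ 2))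
    (P : Fin M → EuclideanSpace ℝ (Fin N) → EuclideanSpace ℝ (Fin N))
    (hP : ∀ (i : Fin M) (v : EuclideanSpace ℝ (Fin N)),
      P i v = ((∑ j, A i j * v j) / ∑ j, A i j ^ 2) • (WithLp.equiv 2 (Fin N → ℝ)).symm (A i))
    (e : EuclideanSpace ℝ (Fin N)) :
    ∑ i, p i * ‖e - P i e‖ ^ 2 ≤ (1 - σ ^ 2 / ∑ i, ∑ j, A i j ^ 2) * ‖e‖ ^ 2 :=
  randomized_kaczmarz_one_step_expected_error_general A σ hσ p hp P hP e
end
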